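/- Let t be a positive integer, G a flower group with pistil C₀ and petals C₁, …, C_k, and fix 1 ≤ i ≤ k. If h ∈ G satisfies h^t ∈ C_i \ C₀, then h ∈ C_i \ C₀. -/

import Mathlib

/-- A cyclic subgroup `C` of `G` is a μ-subgroup if it is not contained in any cyclic
subgroup of `G` other than `C` itself. -/
def IsMuSubgroup {G : Type*} [Group G] (C : Subgroup G) : Prop :=
  IsCyclic ↥C ∧ ∀ K : Subgroup G, IsCyclic ↥K → C ≤ K → C = K

/-- A noncyclic group `G` is a flower group with pistil `C0` if any two distinct
μ-subgroups of `G` intersect exactly in `C0`. -/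
def IsFlowerGroup {G : Type*} [Group G] (C0 : Subgroup G) : Prop :=
  ¬ IsCyclic G ∧
    ∀ C C' : Subgroup G, IsMuSubgroup C → IsMuSubgroup C' → C ≠ C' → C ⊓ C' = C0

/-
The cyclic subgroup generated by `h` lies in some petal; that petal meets `C` in `h ^ t ∉ C₀`,
so it cannot be a different petal, and `h ∉ C₀` because `C₀` is closed under powers.
-/

section MuSubgroup

variable {G : Type*} [Group G]

theorem isMuSubgroup_iff_maximal {C : Subgroup G} :
    IsMuSubgroup C ↔ Maximal (fun K : Subgroup G => IsCyclic K) C :=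
  ⟨fun ⟨hC, hmax⟩ => ⟨hC, fun K hK hle => (hmax K hK hle).ge⟩,
    fun ⟨hC, hmax⟩ => ⟨hC, fun _ hK hle => le_antisymm hle (hmax hK hle)⟩⟩

theorem exists_isMuSubgroup_mem [Finite G] (g : G) :
    ∃ K : Subgroup G, IsMuSubgroup K ∧ g ∈ K := by
  obtain ⟨K, hle, hK⟩ :=
    Finite.exists_le_maximal (p := fun K : Subgroup G => IsCyclic K) (Subgroup.isCyclic_zpowers g)
  exact ⟨K, isMuSubgroup_iff_maximal.mpr hK, hle (Subgroup.mem_zpowers g)⟩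

theorem IsFlowerGroup.eq_of_mem_of_notMem {C0 C C' : Subgroup G} (hG : IsFlowerGroup C0)
    (hC : IsMuSubgroup C) (hC' : IsMuSubgroup C') {x : G} (hxC : x ∈ C) (hxC' : x ∈ C')
    (hx : x ∉ C0) : C = C' := by
  by_contra hne
  rw [← hG.2 C C' hC hC' hne] at hx
  exact hx ⟨hxC, hxC'⟩

end MuSubgroup

theorem stmt13_general (t : ℕ) {G : Type*} [Group G] [Finite G]
    (C0 : Subgroup G) (hG : IsFlowerGroup C0)
    (C : Subgroup G) (hC : IsMuSubgroup C)
    (h : G) (h1 : h ^ t ∈ C) (h2 : h ^ t ∉ C0) :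
    h ∈ C ∧ h ∉ C0 := by
  obtain ⟨K, hK, hhK⟩ := exists_isMuSubgroup_mem h
  obtain rfl : K = C := hG.eq_of_mem_of_notMem hK hC (K.pow_mem hhK t) h1 h2
  exact ⟨hhK, fun hh0 => h2 (C0.pow_mem hh0 t)⟩

/-- If G is a flower group with pistil C₀, C_i is a petal, and h^t ∈ C_i \ C₀,
then h ∈ C_i \ C₀. -/
theorem stmt13 (t : ℕ) (ht : 0 < t) {G : Type*} [Group G] [Finite G]
    (C0 : Subgroup G) (hG : IsFlowerGroup C0)
    (C : Subgroup G) (hC : IsMuSubgroup C)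
    (h : G) (h1 : h ^ t ∈ C) (h2 : h ^ t ∉ C0) :
    h ∈ C ∧ h ∉ C0 :=
  stmt13_general t C0 hG C hC h h1 h2
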